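/- arXiv:2409.18789 — 3 statements merged into one kernel-verified Lean document; each statement's English description precedes it below -/
import Mathlib

section
/- The direct limit of the system ℤ² → ℤ² → ⋯ with each map given by the matrix [[4,1],[1,4]] does not split as a direct sum ℤ[1/5] ⊕ ℤ[1/3]; more precisely, every injective group homomorphism ι : ℤ[1/5] → lim→(ℤ², σ) sends 1 to a 5-eigenvector (c,c) in some stage, and the resulting short exact sequence 0 → ℤ[1/5] → lim→(ℤ², σ) → ℤ[1/3] → 0 does not split. -/
/-!
The functionals `v ↦ v₀ + v₁` and `v ↦ v₀ - v₁` are left eigenvectors of `σ` with eigenvalues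
`5` and `3`, so `[v]ₖ ↦ (v₀ + v₁) / 5ᵏ` and `[v]ₖ ↦ (v₀ - v₁) / 3ᵏ` are well defined on the direct
limit, with values in `ℤ[1/5]` and `ℤ[1/3]`. Every element of `ℤ[1/p]` is divisible by all powers
of `p`, and a nonzero element of `ℤ[1/3]` is not divisible by all powers of `5`; hence the
`3`-coordinate vanishes on the image of any `ι : ℤ[1/5] → L`, which makes `ι 1` the class of some
`(c, c)` and puts the `5`-coordinates of `ι(ℤ[1/5])` into `2·ℤ[1/5]`. Symmetrically the
`5`-coordinate vanishes on the image of a section `s` of `π`. Then for `e = [(1, 0)]₀` the element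
`e - s (π e)` lies in `ker π = ι(ℤ[1/5])` but has `5`-coordinate `1 ∉ 2·ℤ[1/5]`.
-/

noncomputable section

/-- The subgroup `ℤ[1/p] ⊆ ℚ` of fractions with denominator a power of `p`. -/
def zOneDiv (p : ℕ) : AddSubgroup ℚ :=
  AddSubgroup.closure {q : ℚ | ∃ n : ℕ, q = 1 / (p : ℚ) ^ n}

/-- The matrix `[[4,1],[1,4]]` as an endomorphism of `ℤ²`. -/
def sigma : Module.End ℤ (Fin 2 → ℤ) := Matrix.toLin' !![4, 1; 1, 4]

/-- The constant directed system `ℤ² → ℤ² → ⋯` with transition map `σ`. -/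
def fSys : ∀ i j : ℕ, i ≤ j → (Fin 2 → ℤ) →ₗ[ℤ] (Fin 2 → ℤ) :=
  fun i j _ => sigma ^ (j - i)

/-- The direct limit `lim→(ℤ², σ)`. -/
def L : Type := Module.DirectLimit (fun _ : ℕ => Fin 2 → ℤ) fSys

instance : AddCommGroup L := Module.DirectLimit.addCommGroup _ fSys

/-- The class in the direct limit of a vector at stage `k`. -/
def ofL (k : ℕ) (v : Fin 2 → ℤ) : L :=
  Module.DirectLimit.of ℤ ℕ (fun _ : ℕ => Fin 2 → ℤ) fSys k v

/-- `1 ∈ ℤ[1/5]`. -/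
def one5 : ↥(zOneDiv 5) := ⟨1, AddSubgroup.subset_closure ⟨0, by norm_num⟩⟩

namespace zOneDiv

variable {p : ℕ}

lemma mem_iff (hp : p ≠ 0) {q : ℚ} :
    q ∈ zOneDiv p ↔ ∃ (a : ℤ) (M : ℕ), q = a / (p : ℚ) ^ M := by
  have hp' : (p : ℚ) ≠ 0 := Nat.cast_ne_zero.2 hp
  constructor
  · intro hq
    induction hq using AddSubgroup.closure_induction with
    | mem q hq =>
      obtain ⟨n, rfl⟩ := hq
      exact ⟨1, n, by simp⟩
    | zero => exact ⟨0, 0, by simp⟩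
    | add q r _ _ hq hr =>
      obtain ⟨a, M, rfl⟩ := hq
      obtain ⟨b, N, rfl⟩ := hr
      refine ⟨a * p ^ N + b * p ^ M, M + N, ?_⟩
      field_simp
      push_cast
      ring
    | neg q _ hq =>
      obtain ⟨a, M, rfl⟩ := hq
      exact ⟨-a, M, by push_cast; ring⟩
  · rintro ⟨a, M, rfl⟩
    rw [div_eq_mul_one_div, ← zsmul_eq_mul]
    exact AddSubgroup.zsmul_mem _
      (AddSubgroup.subset_closure ⟨M, rfl⟩ : 1 / (p : ℚ) ^ M ∈ zOneDiv p) a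

lemma one_mem : (1 : ℚ) ∈ zOneDiv p :=
  AddSubgroup.subset_closure ⟨0, by simp⟩

lemma exists_pow_zsmul_eq (hp : p ≠ 0) (x : zOneDiv p) (n : ℕ) :
    ∃ y : zOneDiv p, ((p : ℤ) ^ n) • y = x := by
  obtain ⟨a, M, hx⟩ := (mem_iff hp).1 x.2
  refine ⟨⟨a / (p : ℚ) ^ (M + n), (mem_iff hp).2 ⟨a, M + n, rfl⟩⟩, Subtype.ext ?_⟩
  have hp' : (p : ℚ) ≠ 0 := Nat.cast_ne_zero.2 hp
  simp only [AddSubgroup.coe_zsmul, zsmul_eq_mul, hx]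
  field_simp
  push_cast
  ring

lemma map_eq_mul (hp : p ≠ 0) (f : zOneDiv p →+ ℚ) (x : zOneDiv p) :
    f x = x * f ⟨1, one_mem⟩ := by
  obtain ⟨a, M, hx⟩ := (mem_iff hp).1 x.2
  have hp' : (p : ℚ) ≠ 0 := Nat.cast_ne_zero.2 hp
  have hsmul : ((p : ℤ) ^ M) • x = a • (⟨1, one_mem⟩ : zOneDiv p) := Subtype.ext <| by
    simp only [AddSubgroup.coe_zsmul, zsmul_eq_mul, hx]
    field_simp
    push_cast
    ring
  have hf := congrArg f hsmul
  rw [map_zsmul, map_zsmul, zsmul_eq_mul, zsmul_eq_mul] at hf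
  rw [hx]
  field_simp
  push_cast at hf
  linear_combination hf

end zOneDiv

lemma sigma_apply (v : Fin 2 → ℤ) : sigma v = ![4 * v 0 + v 1, v 0 + 4 * v 1] := by
  ext i
  fin_cases i <;> simp [sigma, Matrix.mulVec, dotProduct, Fin.sum_univ_two]

lemma LinearMap.comp_pow_apply_of_comp_eq_smul {R M N : Type*} [CommSemiring R]
    [AddCommMonoid M] [Module R M] [AddCommMonoid N] [Module R N]
    {f : Module.End R M} {r : M →ₗ[R] N} {μ : R} (hr : r ∘ₗ f = μ • r) (m : ℕ) (x : M) :
    r ((f ^ m) x) = μ ^ m • r x := by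
  induction m generalizing x with
  | zero => simp
  | succ m ih =>
    rw [pow_succ, Module.End.mul_apply, ih, ← LinearMap.comp_apply, hr, pow_succ, mul_smul,
      LinearMap.smul_apply, smul_comm]

lemma exists_ofL (x : L) : ∃ k v, ofL k v = x :=
  Module.DirectLimit.exists_of x

section eigenCoord

variable (r : (Fin 2 → ℤ) →ₗ[ℤ] ℤ) (μ : ℤ) (hμ : μ ≠ 0) (hr : r ∘ₗ sigma = μ • r)

def eigenCoord : L →ₗ[ℤ] ℚ :=
  Module.DirectLimit.lift ℤ ℕ _ fSys
    (fun k => ((μ : ℚ) ^ k)⁻¹ • (Int.castAddHom ℚ).toIntLinearMap ∘ₗ r)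
    (fun i j hij x => by
      have hμ' : (μ : ℚ) ≠ 0 := Int.cast_ne_zero.2 hμ
      obtain ⟨m, rfl⟩ := Nat.exists_eq_add_of_le hij
      simp only [fSys, Nat.add_sub_cancel_left, LinearMap.smul_apply, LinearMap.comp_apply,
        LinearMap.comp_pow_apply_of_comp_eq_smul hr, smul_eq_mul, AddMonoidHom.coe_toIntLinearMap,
        Int.coe_castAddHom, Int.cast_mul, Int.cast_pow, pow_add]
      field_simp)

lemma eigenCoord_ofL (k : ℕ) (v : Fin 2 → ℤ) :
    eigenCoord r μ hμ hr (ofL k v) = r v / (μ : ℚ) ^ k :=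
  (Module.DirectLimit.lift_of _ _ _).trans <| by simp [div_eq_inv_mul]

lemma eigenCoord_eq_zero_of_forall_pow_dvd {m : ℤ} (hm : m.natAbs ≠ 1) (hcop : IsCoprime m μ)
    {x : L} (hx : ∀ n : ℕ, ∃ y : L, m ^ n • y = x) : eigenCoord r μ hμ hr x = 0 := by
  have hμ' : (μ : ℚ) ≠ 0 := Int.cast_ne_zero.2 hμ
  obtain ⟨k, v, rfl⟩ := exists_ofL x
  rw [eigenCoord_ofL, div_eq_zero_iff, Int.cast_eq_zero, or_iff_left (pow_ne_zero _ hμ')]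
  by_contra hv
  obtain ⟨n, hn⟩ := Int.finiteMultiplicity_iff.2 ⟨hm, hv⟩
  obtain ⟨y, hy⟩ := hx (n + 1)
  obtain ⟨j, w, rfl⟩ := exists_ofL y
  have h := congrArg (eigenCoord r μ hμ hr) hy
  rw [map_zsmul, eigenCoord_ofL, eigenCoord_ofL, zsmul_eq_mul] at h
  field_simp at h
  have hz : m ^ (n + 1) * r w * μ ^ k = μ ^ j * r v := by exact_mod_cast h
  exact hn ((hcop.pow (m := n + 1) (n := j)).dvd_of_dvd_mul_right
    ⟨r w * μ ^ k, by linear_combination -hz⟩)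

lemma eigenCoord_map_eq_zero {p : ℕ} (hp : 1 < p) (hcop : IsCoprime (p : ℤ) μ)
    (f : zOneDiv p →+ L) (x : zOneDiv p) : eigenCoord r μ hμ hr (f x) = 0 := by
  refine eigenCoord_eq_zero_of_forall_pow_dvd r μ hμ hr (by omega) hcop fun n => ?_
  obtain ⟨y, hy⟩ := zOneDiv.exists_pow_zsmul_eq (by omega) x n
  exact ⟨f y, by rw [← map_zsmul, hy]⟩

end eigenCoord

def coord5 : L →ₗ[ℤ] ℚ :=
  eigenCoord (dotProductEquiv ℤ (Fin 2) ![1, 1]) 5 (by norm_num)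
    (LinearMap.ext fun v => by simp [sigma_apply, dotProduct, Fin.sum_univ_two]; ring)

def coord3 : L →ₗ[ℤ] ℚ :=
  eigenCoord (dotProductEquiv ℤ (Fin 2) ![1, -1]) 3 (by norm_num)
    (LinearMap.ext fun v => by simp [sigma_apply, dotProduct, Fin.sum_univ_two]; ring)

lemma coord5_ofL (k : ℕ) (v : Fin 2 → ℤ) :
    coord5 (ofL k v) = (v 0 + v 1 : ℤ) / (5 : ℚ) ^ k := by
  simp [coord5, eigenCoord_ofL, dotProduct, Fin.sum_univ_two]

lemma coord3_ofL (k : ℕ) (v : Fin 2 → ℤ) :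
    coord3 (ofL k v) = (v 0 - v 1 : ℤ) / (3 : ℚ) ^ k := by
  simp [coord3, eigenCoord_ofL, dotProduct, Fin.sum_univ_two, sub_eq_add_neg]

lemma coord3_map_eq_zero (f : zOneDiv 5 →+ L) (x : zOneDiv 5) : coord3 (f x) = 0 :=
  eigenCoord_map_eq_zero _ _ _ _ (by norm_num) (by norm_num [Int.isCoprime_iff_gcd_eq_one]) f x

lemma coord5_map_eq_zero (f : zOneDiv 3 →+ L) (x : zOneDiv 3) : coord5 (f x) = 0 :=
  eigenCoord_map_eq_zero _ _ _ _ (by norm_num) (by norm_num [Int.isCoprime_iff_gcd_eq_one]) f x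

lemma exists_eq_ofL_const_of_coord3_eq_zero {x : L} (hx : coord3 x = 0) :
    ∃ (k : ℕ) (c : ℤ), x = ofL k fun _ => c := by
  obtain ⟨k, v, rfl⟩ := exists_ofL x
  rw [coord3_ofL, div_eq_zero_iff, Int.cast_eq_zero, or_iff_left (by positivity)] at hx
  refine ⟨k, v 0, congrArg _ (funext fun i => ?_)⟩
  fin_cases i
  · rfl
  · change v 1 = v 0
    omega

lemma coord5_map_ne_one (ι : zOneDiv 5 →+ L) (u : zOneDiv 5) : coord5 (ι u) ≠ 1 := by
  obtain ⟨k, c, hc⟩ := exists_eq_ofL_const_of_coord3_eq_zero (coord3_map_eq_zero ι one5)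
  obtain ⟨a, M, hu⟩ := (zOneDiv.mem_iff (by norm_num)).1 u.2
  have h : coord5 (ι u) = u * coord5 (ι one5) :=
    zOneDiv.map_eq_mul (by norm_num) (coord5.toAddMonoidHom.comp ι) u
  rw [hc, coord5_ofL, hu] at h
  intro h1
  rw [h1] at h
  field_simp at h
  have hodd : Odd ((5 : ℤ) ^ M * 5 ^ k) := (Odd.pow (by decide)).mul (Odd.pow (by decide))
  have h' : (5 : ℤ) ^ M * 5 ^ k = a * (c + c) := by exact_mod_cast h
  exact Int.not_even_iff_odd.2 hodd ⟨a * c, by linear_combination h'⟩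

/-- The direct limit of `ℤ² → ℤ² → ⋯` along `[[4,1],[1,4]]` does not split as
`ℤ[1/5] ⊕ ℤ[1/3]`: every injective homomorphism `ι : ℤ[1/5] → L` sends `1` to the class
of a `5`-eigenvector `(c,c)` at some stage, and for any such `ι` exhibiting a short exact
sequence `0 → ℤ[1/5] → L → ℤ[1/3] → 0`, the sequence does not split. -/
theorem stmt0 :
    (∀ ι : ↥(zOneDiv 5) →+ L, Function.Injective ι →
      ∃ (k : ℕ) (c : ℤ), ι one5 = ofL k (fun _ => c)) ∧
    (∀ (ι : ↥(zOneDiv 5) →+ L) (π : L →+ ↥(zOneDiv 3)),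
      Function.Injective ι → Function.Surjective π → π.ker = ι.range →
      ¬ ∃ s : ↥(zOneDiv 3) →+ L, π.comp s = AddMonoidHom.id ↥(zOneDiv 3)) := by
  refine ⟨fun ι _ => exists_eq_ofL_const_of_coord3_eq_zero (coord3_map_eq_zero ι one5), ?_⟩
  rintro ι π - - hker ⟨s, hs⟩
  set e : L := ofL 0 ![1, 0]
  obtain ⟨u, hu⟩ : e - s (π e) ∈ ι.range := by
    rw [← hker, AddMonoidHom.mem_ker, map_sub, ← AddMonoidHom.comp_apply π s, hs,
      AddMonoidHom.id_apply, sub_self]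
  apply coord5_map_ne_one ι u
  rw [hu, map_sub, coord5_map_eq_zero, sub_zero, coord5_ofL]
  norm_num
end
end

section
/- The cokernel of the map ι : lim→(ℤ, ×5) → lim→(ℤ², σ), induced at each stage by n ↦ (n, n), where σ = [[4,1],[1,4]], is isomorphic to ℤ[1/3]. -/
noncomputable section

/-- Multiplication by `5` as an endomorphism of `ℤ`. -/
def mul5 : Module.End ℤ ℤ := (5 : ℤ) • LinearMap.id

/-- The constant directed system `ℤ → ℤ → ⋯` with transition map `×5`. -/
def fSys5 : ∀ i j : ℕ, i ≤ j → ℤ →ₗ[ℤ] ℤ :=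
  fun i j _ => mul5 ^ (j - i)

/-- The direct limit `lim→(ℤ, ×5)`. -/
def L1 : Type := Module.DirectLimit (fun _ : ℕ => ℤ) fSys5

instance : AddCommGroup L1 := Module.DirectLimit.addCommGroup _ fSys5

/-- The direct limit `lim→(ℤ², σ)`. -/
def L2 : Type := Module.DirectLimit (fun _ : ℕ => Fin 2 → ℤ) fSys

instance : AddCommGroup L2 := Module.DirectLimit.addCommGroup _ fSys

/-- The class in `lim→(ℤ, ×5)` of an integer at stage `k`. -/
def ofL1 (k : ℕ) (n : ℤ) : L1 :=
  Module.DirectLimit.of ℤ ℕ (fun _ : ℕ => ℤ) fSys5 k n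

/-- The class in `lim→(ℤ², σ)` of a vector at stage `k`. -/
def ofL2 (k : ℕ) (v : Fin 2 → ℤ) : L2 :=
  Module.DirectLimit.of ℤ ℕ (fun _ : ℕ => Fin 2 → ℤ) fSys k v

/-- The cokernel of the map `lim→(ℤ, ×5) → lim→(ℤ², [[4,1],[1,4]])` induced stagewise by
the diagonal `n ↦ (n,n)` is isomorphic to `ℤ[1/3]`. -/
theorem stmt3 (ι : L1 →+ L2)
    (hι : ∀ (k : ℕ) (n : ℤ), ι (ofL1 k n) = ofL2 k (fun _ => n)) :
    Nonempty ((L2 ⧸ ι.range) ≃+ ↥(zOneDiv 3)) := by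
  -- stagewise maps v ↦ (v 0 - v 1)/3^k
  set g : ∀ _ : ℕ, (Fin 2 → ℤ) →ₗ[ℤ] ℚ := fun k =>
    { toFun := fun v => ((v 0 - v 1 : ℤ) : ℚ) / 3 ^ k
      map_add' := fun v w => by simp only [Pi.add_apply]; push_cast; ring
      map_smul' := fun c v => by
        simp only [Pi.smul_apply, smul_eq_mul, RingHom.id_apply, zsmul_eq_mul]
        push_cast; ring } with hg
  have hsig : ∀ v : Fin 2 → ℤ, (sigma v) 0 - (sigma v) 1 = 3 * (v 0 - v 1) := by
    intro v
    simp [sigma, Matrix.toLin'_apply, Matrix.mulVec, dotProduct,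
      Fin.sum_univ_two]
    ring
  have key : ∀ (m k : ℕ) (v : Fin 2 → ℤ),
      g (k + m) ((sigma ^ m) v) = g k v := by
    intro m
    induction m with
    | zero => intro k v; simp
    | succ m ih =>
      intro k v
      rw [pow_succ, Module.End.mul_apply]
      have h2 := ih (k + 1) (sigma v)
      have hk : k + 1 + m = k + (m + 1) := by ring
      rw [hk] at h2
      rw [h2]
      simp only [hg, LinearMap.coe_mk, AddHom.coe_mk, hsig v]
      push_cast
      rw [pow_succ]
      field_simp
  have Hg : ∀ (i j : ℕ) (hij : i ≤ j) (x : Fin 2 → ℤ), g j (fSys i j hij x) = g i x := by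
    intro i j hij x
    obtain ⟨m, rfl⟩ : ∃ m, j = i + m := ⟨j - i, by omega⟩
    have : fSys i (i + m) hij = sigma ^ m := by simp [fSys]
    rw [this]
    exact key m i x
  set φ : L2 →ₗ[ℤ] ℚ := Module.DirectLimit.lift ℤ ℕ (fun _ : ℕ => Fin 2 → ℤ) fSys g Hg with hφ
  set φ' : L2 →+ ℚ := φ.toAddMonoidHom with hφ'
  have φof : ∀ (k : ℕ) (v : Fin 2 → ℤ), φ' (ofL2 k v) = ((v 0 - v 1 : ℤ) : ℚ) / 3 ^ k := by
    intro k v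
    exact Module.DirectLimit.lift_of (f := fSys) (g := g) (Hg := Hg) v
  -- kernel computation
  have hker : ι.range = φ'.ker := by
    ext x
    constructor
    · rintro ⟨y, rfl⟩
      obtain ⟨k, n, rfl⟩ := Module.DirectLimit.exists_of y
      rw [AddMonoidHom.mem_ker]
      have : ι (ofL1 k n) = ofL2 k (fun _ => n) := hι k n
      rw [show Module.DirectLimit.of ℤ ℕ (fun _ : ℕ => ℤ) fSys5 k n = ofL1 k n from rfl, this,
        φof]
      simp
    · intro hx
      rw [AddMonoidHom.mem_ker] at hx
      obtain ⟨k, v, rfl⟩ := Module.DirectLimit.exists_of x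
      rw [show Module.DirectLimit.of ℤ ℕ (fun _ : ℕ => Fin 2 → ℤ) fSys k v = ofL2 k v from rfl,
        φof] at hx
      have h30 : ((3 : ℚ) ^ k) ≠ 0 := by positivity
      have hv : v 0 = v 1 := by
        field_simp at hx
        exact_mod_cast sub_eq_zero.mp (by exact_mod_cast hx)
      refine ⟨ofL1 k (v 0), ?_⟩
      rw [hι k (v 0)]
      congr 1
      funext i
      fin_cases i <;> simp [hv]
  -- range computation
  have hrange : φ'.range = zOneDiv 3 := by
    apply le_antisymm
    · rintro _ ⟨x, rfl⟩
      obtain ⟨k, v, rfl⟩ := Module.DirectLimit.exists_of x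
      rw [show Module.DirectLimit.of ℤ ℕ (fun _ : ℕ => Fin 2 → ℤ) fSys k v = ofL2 k v from rfl,
        φof]
      have h1 : (1 : ℚ) / (3 : ℕ) ^ k ∈ zOneDiv 3 :=
        AddSubgroup.subset_closure ⟨k, rfl⟩
      have := AddSubgroup.zsmul_mem _ h1 (v 0 - v 1)
      convert this using 1
      rw [zsmul_eq_mul]
      push_cast
      ring
    · rw [zOneDiv]
      rw [AddSubgroup.closure_le]
      rintro _ ⟨n, rfl⟩
      refine ⟨ofL2 n ![1, 0], ?_⟩
      rw [φof]
      norm_num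
  rw [hker]
  have e1 := QuotientAddGroup.quotientKerEquivRange φ'
  rw [hrange] at e1
  exact ⟨e1⟩
end
end

section
/- Let X be a 2-divisible abelian group and B a subgroup of ℚ contained in ℤ[1/2], and let g : X → B be a surjective homomorphism. Then g admits a section: there is a homomorphism s : B → X with g ∘ s = id. -/
/-!
Let `B ∩ ℤ = dℤ`. Since `B ⊆ ℤ[1/2]`, every element of `B` has the form `a d / 2ⁿ`. Pick `c₀ ∈ X`
with `g c₀ = d` and, using 2-divisibility, a sequence with `cₙ₊₁ + cₙ₊₁ = cₙ`. Then
`a d / 2ⁿ ↦ a • cₙ` is well defined, because `a • cₙ = (2ᵏ a) • cₙ₊ₖ`, and it is the required section.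
-/

noncomputable section

theorem exists_eq_int_div_two_pow_of_mem_zOneDiv {q : ℚ} (hq : q ∈ zOneDiv 2) :
    ∃ (a : ℤ) (n : ℕ), q = a / 2 ^ n := by
  induction hq using AddSubgroup.closure_induction with
  | mem q hq =>
    obtain ⟨n, rfl⟩ := hq
    exact ⟨1, n, by simp⟩
  | zero => exact ⟨0, 0, by simp⟩
  | add x y _ _ hx hy =>
    obtain ⟨a, n, rfl⟩ := hx
    obtain ⟨b, m, rfl⟩ := hy
    exact ⟨a * 2 ^ m + b * 2 ^ n, n + m, by push_cast; field_simp; ring⟩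
  | neg x _ hx =>
    obtain ⟨a, n, rfl⟩ := hx
    exact ⟨-a, n, by push_cast; ring⟩

theorem exists_int_mem_forall_eq_mul_div_two_pow {B : AddSubgroup ℚ} (hB : B ≤ zOneDiv 2) :
    ∃ d : ℤ, (d : ℚ) ∈ B ∧ ∀ b ∈ B, ∃ (a : ℤ) (n : ℕ), b = a * d / 2 ^ n := by
  obtain ⟨d, hd⟩ := Int.subgroup_cyclic (B.comap (Int.castAddHom ℚ))
  have hdB : d ∈ B.comap (Int.castAddHom ℚ) := hd ▸ AddSubgroup.subset_closure rfl
  refine ⟨d, hdB, fun b hb => ?_⟩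
  obtain ⟨m, n, rfl⟩ := exists_eq_int_div_two_pow_of_mem_zOneDiv (hB hb)
  have hm : m ∈ B.comap (Int.castAddHom ℚ) := by
    have := B.nsmul_mem hb (2 ^ n)
    rwa [nsmul_eq_mul, Nat.cast_pow, Nat.cast_ofNat, mul_div_cancel₀ _ (by positivity)] at this
  rw [hd, AddSubgroup.mem_closure_singleton] at hm
  obtain ⟨a, rfl⟩ := hm
  exact ⟨a, n, by rw [smul_eq_mul]; push_cast; ring⟩

theorem int_mul_two_pow_eq_of_mul_div_two_pow_eq {d : ℚ} (hd : d ≠ 0) {a₁ a₂ : ℤ} {n₁ n₂ : ℕ}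
    (h : a₁ * d / 2 ^ n₁ = a₂ * d / 2 ^ n₂) : a₁ * 2 ^ n₂ = a₂ * 2 ^ n₁ := by
  rw [div_eq_div_iff (by positivity) (by positivity)] at h
  have : ((a₁ * 2 ^ n₂ : ℤ) : ℚ) * d = (a₂ * 2 ^ n₁ : ℤ) * d := by
    push_cast
    linear_combination h
  exact_mod_cast mul_right_cancel₀ hd this

section Halving

variable {X : Type*} [AddCommGroup X] {c : ℕ → X}

theorem exists_halving_seq (hX : ∀ x : X, ∃ x', x' + x' = x) (x₀ : X) :
    ∃ c : ℕ → X, c 0 = x₀ ∧ ∀ n, c (n + 1) + c (n + 1) = c n := by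
  choose half hhalf using hX
  exact ⟨fun n => half^[n] x₀, rfl, fun n => by
    simp only [Function.iterate_succ_apply']
    exact hhalf _⟩

theorem halving_seq_eq_two_pow_zsmul (hc : ∀ n, c (n + 1) + c (n + 1) = c n) (n k : ℕ) :
    c n = (2 ^ k : ℤ) • c (n + k) := by
  induction k with
  | zero => simp
  | succ k ih => rw [ih, ← hc (n + k), ← two_zsmul, smul_smul, ← pow_succ, add_assoc]

theorem zsmul_halving_seq_eq (hc : ∀ n, c (n + 1) + c (n + 1) = c n) {a₁ a₂ : ℤ} {n₁ n₂ : ℕ}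
    (h : a₁ * 2 ^ n₂ = a₂ * 2 ^ n₁) : a₁ • c n₁ = a₂ • c n₂ := by
  rw [halving_seq_eq_two_pow_zsmul hc n₁ n₂, halving_seq_eq_two_pow_zsmul hc n₂ n₁, smul_smul,
    smul_smul, h, add_comm]

theorem map_halving_seq (f : X →+ ℚ) (hc : ∀ n, c (n + 1) + c (n + 1) = c n) (n : ℕ) :
    f (c n) = f (c 0) / 2 ^ n := by
  induction n with
  | zero => simp
  | succ n ih =>
    rw [← hc n, map_add] at ih
    rw [pow_succ]
    rw [eq_div_iff (by positivity)] at ih ⊢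
    linear_combination ih

theorem exists_addMonoidHom_eq_zsmul_halving_seq (hc : ∀ n, c (n + 1) + c (n + 1) = c n)
    {B : AddSubgroup ℚ} {d : ℚ} (hd : d ≠ 0)
    (hB : ∀ b ∈ B, ∃ (a : ℤ) (n : ℕ), b = a * d / 2 ^ n) :
    ∃ φ : B →+ X, ∀ (b : B) (a : ℤ) (n : ℕ), (b : ℚ) = a * d / 2 ^ n → φ b = a • c n := by
  choose a n ha using fun b : B => hB b b.2
  have key : ∀ (b : B) (a' : ℤ) (n' : ℕ), (b : ℚ) = a' * d / 2 ^ n' → a b • c (n b) = a' • c n' :=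
    fun b a' n' hb => zsmul_halving_seq_eq hc <|
      int_mul_two_pow_eq_of_mul_div_two_pow_eq hd ((ha b).symm.trans hb)
  refine ⟨AddMonoidHom.mk' (fun b => a b • c (n b)) fun b₁ b₂ => ?_, key⟩
  have hsum : ((b₁ + b₂ : B) : ℚ) =
      ((a b₁ * 2 ^ n b₂ + a b₂ * 2 ^ n b₁ : ℤ) : ℚ) * d / 2 ^ (n b₁ + n b₂) := by
    rw [AddSubgroup.coe_add, ha b₁, ha b₂]
    push_cast
    field_simp
    ring
  rw [key _ _ _ hsum, add_smul, ← smul_smul, ← smul_smul, ← halving_seq_eq_two_pow_zsmul hc,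
    add_comm (n b₁), ← halving_seq_eq_two_pow_zsmul hc]

end Halving

/-- If `X` is a `2`-divisible abelian group, `B` is a subgroup of `ℚ` contained in the
dyadic rationals `ℤ[1/2]`, and `g : X → B` is a surjective homomorphism, then `g` admits
a section. -/
theorem stmt9 {X : Type} [AddCommGroup X] (hX : ∀ x : X, ∃ x', x' + x' = x)
    (B : AddSubgroup ℚ) (hB : B ≤ zOneDiv 2)
    (g : X →+ ↥B) (hg : Function.Surjective g) :
    ∃ s : ↥B →+ X, g.comp s = AddMonoidHom.id ↥B := by
  obtain ⟨d, hdB, hrep⟩ := exists_int_mem_forall_eq_mul_div_two_pow hB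
  rcases eq_or_ne (d : ℚ) 0 with hd | hd
  · refine ⟨0, AddMonoidHom.ext fun b => Subtype.ext ?_⟩
    obtain ⟨a, n, hb⟩ := hrep b b.2
    simp [hb, hd]
  obtain ⟨x₀, hx₀⟩ := hg ⟨d, hdB⟩
  obtain ⟨c, rfl, hc⟩ := exists_halving_seq hX x₀
  obtain ⟨s, hs⟩ := exists_addMonoidHom_eq_zsmul_halving_seq hc hd hrep
  refine ⟨s, AddMonoidHom.ext fun b => Subtype.ext ?_⟩
  obtain ⟨a, n, hb⟩ := hrep b b.2
  have hgc := map_halving_seq (B.subtype.comp g) hc n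
  simp only [AddMonoidHom.comp_apply, AddSubgroup.coe_subtype, hx₀] at hgc
  simp only [AddMonoidHom.comp_apply, hs b a n hb, map_zsmul, AddSubgroup.coe_zsmul, hgc,
    AddMonoidHom.id_apply, hb, zsmul_eq_mul]
  ring
end
end
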